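/- arXiv:2405.11421 — 9 statements merged into one kernel-verified Lean document; each statement's English description precedes it below -/
import Mathlib

section
/- With odds ratios min{S/Q, 1} and min{s/q, 1} for the two groups (Q, q ∈ (0,1]), and budget constraint (1-β)S + βs = σ, equalized odds min{S/Q,1} = min{s/q,1} holds if and only if either (S = Qρ ≤ Q and s = qρ ≤ q) or (S ≥ Q and s ≥ q), where ρ = σ/((1-β)Q + βq). -/
/-! Both odds ratios are capped at 1, so they agree exactly when both are capped or when the
uncapped ratios `S / Q` and `s / q` coincide. In the latter case `S = Q r` and `s = q r`, and the
budget constraint reads `σ = r ((1 - β) Q + β q)`, which forces `r = ρ`. -/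

theorem min_eq_min_iff {α : Type*} [LinearOrder α] {a b c : α} :
    min a c = min b c ↔ (a = b ∧ a ≤ c ∧ b ≤ c) ∨ (c ≤ a ∧ c ≤ b) := by
  grind

theorem div_eq_div_iff_eq_mul_div_of_add_eq {K : Type*} [Field K] {a b σ Q q S s : K}
    (hQ : Q ≠ 0) (hq : q ≠ 0) (hσ : σ ≠ 0) (h : a * S + b * s = σ) :
    S / Q = s / q ↔
      S = Q * (σ / (a * Q + b * q)) ∧ s = q * (σ / (a * Q + b * q)) := by
  constructor
  · intro hr
    have hS : S = Q * (S / Q) := (mul_div_cancel₀ S hQ).symm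
    have hs : s = q * (S / Q) := by rw [hr, mul_div_cancel₀ s hq]
    have hσr : σ = S / Q * (a * Q + b * q) := by linear_combination -h + a * hS + b * hs
    have hD : a * Q + b * q ≠ 0 := right_ne_zero_of_mul (hσr ▸ hσ)
    rw [hσr, mul_div_cancel_right₀ _ hD]
    exact ⟨hS, hs⟩
  · rintro ⟨hS, hs⟩
    rw [hS, hs, mul_div_cancel_left₀ _ hQ, mul_div_cancel_left₀ _ hq]

theorem equalized_odds_iff_general (β σ Q q S s ρ : ℝ)
    (hσ : 0 < σ)
    (hQ : 0 < Q) (hq : 0 < q)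
    (hbudget : (1 - β) * S + β * s = σ)
    (hρ : ρ = σ / ((1 - β) * Q + β * q)) :
    min (S / Q) 1 = min (s / q) 1 ↔
      ((S = Q * ρ ∧ S ≤ Q ∧ s = q * ρ ∧ s ≤ q) ∨ (Q ≤ S ∧ q ≤ s)) := by
  rw [min_eq_min_iff, div_le_one₀ hQ, div_le_one₀ hq, one_le_div₀ hQ, one_le_div₀ hq,
    div_eq_div_iff_eq_mul_div_of_add_eq hQ.ne' hq.ne' hσ.ne' hbudget, ← hρ,
    and_and_and_comm, and_assoc]

/-- Equalized odds min{S/Q,1} = min{s/q,1} holds iff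
(S = Qρ ≤ Q and s = qρ ≤ q) or (S ≥ Q and s ≥ q), where ρ = σ/((1-β)Q + βq). -/
theorem equalized_odds_iff (β σ Q q S s ρ : ℝ)
    (hβ : 0 < β) (hβ1 : β < 1) (hσ : 0 < σ) (hσ1 : σ < 1)
    (hQ : 0 < Q) (hQ1 : Q ≤ 1) (hq : 0 < q) (hq1 : q ≤ 1)
    (hS : 0 ≤ S) (hS1 : S ≤ 1) (hs : 0 ≤ s) (hs1 : s ≤ 1)
    (hbudget : (1 - β) * S + β * s = σ)
    (hρ : ρ = σ / ((1 - β) * Q + β * q)) :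
    min (S / Q) 1 = min (s / q) 1 ↔
      ((S = Q * ρ ∧ S ≤ Q ∧ s = q * ρ ∧ s ≤ q) ∨ (Q ≤ S ∧ q ≤ s)) :=
  equalized_odds_iff_general β σ Q q S s ρ hσ hQ hq hbudget hρ
end

section
/- With predictive rates min{Q/S, 1} and min{q/s, 1} (taking rate 1 when the selection rate is 0), and budget constraint (1-β)S + βs = σ, predictive rate parity min{Q/S,1} = min{q/s,1} holds if and only if either (S = Qρ ≥ Q and s = qρ ≥ q) or (S ≤ Q and s ≤ q), where ρ = σ/((1-β)Q + βq). -/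
/-!
The predictive rate of a group equals `1` exactly when it is selected within its qualified pool
(`S ≤ Q`), and equals `Q / S < 1` otherwise. So parity holds either when both groups are selected
within their qualified pools, or when `Q / S = q / s`; in the latter case `S` and `s` are the same
multiple of `Q` and `q`, and the budget constraint forces that multiple to be `ρ`.
-/

/-- `Q` is the qualified fraction and `S` the selection rate of a group. -/
noncomputable def predictiveRate (Q S : ℝ) : ℝ :=
  if S = 0 then 1 else min (Q / S) 1

section predictiveRate

variable {Q q S s : ℝ}

theorem predictiveRate_of_le (hS : 0 ≤ S) (h : S ≤ Q) : predictiveRate Q S = 1 := by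
  unfold predictiveRate
  split_ifs with hS0
  · rfl
  · exact min_eq_right ((one_le_div (lt_of_le_of_ne hS (Ne.symm hS0))).mpr h)

theorem predictiveRate_of_ge (hQ : 0 < Q) (h : Q ≤ S) : predictiveRate Q S = Q / S := by
  have hS : 0 < S := hQ.trans_le h
  rw [predictiveRate, if_neg hS.ne', min_eq_left ((div_le_one hS).mpr h)]

theorem predictiveRate_lt_one (hQ : 0 ≤ Q) (h : Q < S) : predictiveRate Q S < 1 := by
  have hS : 0 < S := hQ.trans_lt h
  rw [predictiveRate, if_neg hS.ne', min_eq_left ((div_le_one hS).mpr h.le)]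
  exact (div_lt_one hS).mpr h

theorem predictiveRate_eq_one_iff (hQ : 0 ≤ Q) (hS : 0 ≤ S) :
    predictiveRate Q S = 1 ↔ S ≤ Q :=
  ⟨fun h => not_lt.mp fun hQS => (predictiveRate_lt_one hQ hQS).ne h, predictiveRate_of_le hS⟩

theorem predictiveRate_eq_predictiveRate_iff (hQ : 0 < Q) (hq : 0 < q) (hS : 0 ≤ S)
    (hs : 0 ≤ s) :
    predictiveRate Q S = predictiveRate q s ↔
      (Q ≤ S ∧ q ≤ s ∧ Q * s = q * S) ∨ (S ≤ Q ∧ s ≤ q) := by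
  constructor
  · intro h
    by_cases hSQ : S ≤ Q
    · rw [predictiveRate_of_le hS hSQ, eq_comm, predictiveRate_eq_one_iff hq.le hs] at h
      exact Or.inr ⟨hSQ, h⟩
    · have hQS : Q < S := not_le.mp hSQ
      have hqs : q < s := by
        by_contra hsq
        rw [predictiveRate_of_le hs (not_lt.mp hsq)] at h
        exact (predictiveRate_lt_one hQ.le hQS).ne h
      rw [predictiveRate_of_ge hQ hQS.le, predictiveRate_of_ge hq hqs.le,
        div_eq_div_iff (hQ.trans hQS).ne' (hq.trans hqs).ne'] at h
      exact Or.inl ⟨hQS.le, hqs.le, h⟩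
  · rintro (⟨hQS, hqs, hprop⟩ | ⟨hSQ, hsq⟩)
    · rw [predictiveRate_of_ge hQ hQS, predictiveRate_of_ge hq hqs,
        div_eq_div_iff (hQ.trans_le hQS).ne' (hq.trans_le hqs).ne']
      exact hprop
    · rw [predictiveRate_of_le hS hSQ, predictiveRate_of_le hs hsq]

end predictiveRate

theorem eq_mul_div_of_mul_eq_mul_of_add_eq {a b σ Q q S s : ℝ} (hQ : Q ≠ 0) (hσ : σ ≠ 0)
    (hprop : Q * s = q * S) (hconstr : a * S + b * s = σ) :
    S = Q * (σ / (a * Q + b * q)) ∧ s = q * (σ / (a * Q + b * q)) := by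
  set t := S / Q
  have hSt : S = Q * t := (mul_div_cancel₀ S hQ).symm
  have hst : s = q * t := mul_left_cancel₀ hQ (by rw [hprop, hSt]; ring)
  have hσt : σ = t * (a * Q + b * q) := by rw [← hconstr, hSt, hst]; ring
  have hD : a * Q + b * q ≠ 0 := fun hD => hσ (by rw [hσt, hD, mul_zero])
  rw [hσt, mul_div_cancel_right₀ t hD]
  exact ⟨hSt, hst⟩

theorem predictive_rate_parity_iff_general (β σ Q q S s ρ : ℝ)
    (hσ : 0 < σ)
    (hQ : 0 < Q) (hq : 0 < q)
    (hS : 0 ≤ S) (hs : 0 ≤ s)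
    (hbudget : (1 - β) * S + β * s = σ)
    (hρ : ρ = σ / ((1 - β) * Q + β * q)) :
    (if S = 0 then (1 : ℝ) else min (Q / S) 1) =
      (if s = 0 then (1 : ℝ) else min (q / s) 1) ↔
      ((S = Q * ρ ∧ Q ≤ S ∧ s = q * ρ ∧ q ≤ s) ∨ (S ≤ Q ∧ s ≤ q)) := by
  change predictiveRate Q S = predictiveRate q s ↔ _
  rw [predictiveRate_eq_predictiveRate_iff hQ hq hS hs]
  subst hρ
  constructor
  · rintro (⟨hQS, hqs, hprop⟩ | hle)
    · obtain ⟨hSρ, hsρ⟩ := eq_mul_div_of_mul_eq_mul_of_add_eq hQ.ne' hσ.ne' hprop hbudget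
      exact Or.inl ⟨hSρ, hQS, hsρ, hqs⟩
    · exact Or.inr hle
  · rintro (⟨hSρ, hQS, hsρ, hqs⟩ | hle)
    · exact Or.inl ⟨hQS, hqs, by rw [hSρ, hsρ]; ring⟩
    · exact Or.inr hle

/-- Predictive rate parity min{Q/S,1} = min{q/s,1} (rate 1 when the
selection rate is 0) holds iff (S = Qρ ≥ Q and s = qρ ≥ q) or (S ≤ Q and s ≤ q),
where ρ = σ/((1-β)Q + βq). -/
theorem predictive_rate_parity_iff (β σ Q q S s ρ : ℝ)
    (hβ : 0 < β) (hβ1 : β < 1) (hσ : 0 < σ) (hσ1 : σ < 1)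
    (hQ : 0 < Q) (hQ1 : Q ≤ 1) (hq : 0 < q) (hq1 : q ≤ 1)
    (hS : 0 ≤ S) (hS1 : S ≤ 1) (hs : 0 ≤ s) (hs1 : s ≤ 1)
    (hbudget : (1 - β) * S + β * s = σ)
    (hρ : ρ = σ / ((1 - β) * Q + β * q)) :
    (if S = 0 then (1 : ℝ) else min (Q / S) 1) =
      (if s = 0 then (1 : ℝ) else min (q / s) 1) ↔
      ((S = Q * ρ ∧ Q ≤ S ∧ s = q * ρ ∧ q ≤ s) ∨ (S ≤ Q ∧ s ≤ q)) :=
  predictive_rate_parity_iff_general β σ Q q S s ρ hσ hQ hq hS hs hbudget hρ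
end

section
/- If the overall selection rate equals the overall qualification rate, i.e., σ = (1-β)Q + βq (so ρ = 1), then a policy (S, s) on the budget line achieves equalized odds if and only if S = Q and s = q. -/
/-- If the overall selection rate equals the overall qualification
rate, σ = (1-β)Q + βq (so ρ = 1), then equalized odds holds iff S = Q and s = q. -/
theorem equalized_odds_rho_one (β Q q S s : ℝ)
    (hβ : 0 < β) (hβ1 : β < 1)
    (hQ : 0 < Q) (hQ1 : Q < 1) (hq : 0 < q) (hq1 : q < 1)
    (hS : 0 ≤ S) (hS1 : S ≤ 1) (hs : 0 ≤ s) (hs1 : s ≤ 1)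
    (hbudget : (1 - β) * S + β * s = (1 - β) * Q + β * q) :
    min (S / Q) 1 = min (s / q) 1 ↔ S = Q ∧ s = q := by
  have hb : 0 < 1 - β := by linarith
  constructor
  · intro h
    rcases le_or_gt Q S with hQS | hQS
    · rcases le_or_gt q s with hqs | hqs
      · constructor <;> nlinarith
      · -- s < q, so s/q < 1, min = s/q; and S/Q ≥ 1 so min = 1. Contradiction.
        have h1 : min (S / Q) 1 = 1 := by
          apply min_eq_right
          rw [le_div_iff₀ hQ]; linarith
        have h2 : s / q < 1 := by rw [div_lt_one hq]; linarith
        rw [h1, min_eq_left h2.le] at h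
        linarith
    · -- S < Q, so min left = S/Q < 1
      have h1 : S / Q < 1 := by rw [div_lt_one hQ]; linarith
      rw [min_eq_left h1.le] at h
      rcases le_or_gt q s with hqs | hqs
      · rw [min_eq_right] at h
        · linarith
        · rw [le_div_iff₀ hq]; linarith
      · rw [min_eq_left] at h
        · -- S/Q = s/q, S < Q, s < q contradicts budget
          exfalso; nlinarith
        · rw [div_le_one hq]; linarith
  · rintro ⟨rfl, rfl⟩; rw [div_self hQ.ne', div_self hq.ne']
end

section
/- If the overall selection rate equals the overall qualification rate (ρ = 1), then a policy (S, s) on the budget line achieves predictive rate parity if and only if S = Q and s = q. -/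
/-- If the overall selection rate equals the overall qualification
rate (ρ = 1), then predictive rate parity (rate 1 when selection rate is 0)
holds iff S = Q and s = q. -/
theorem predictive_rate_parity_rho_one (β Q q S s : ℝ)
    (hβ : 0 < β) (hβ1 : β < 1)
    (hQ : 0 < Q) (hQ1 : Q < 1) (hq : 0 < q) (hq1 : q < 1)
    (hS : 0 ≤ S) (hS1 : S ≤ 1) (hs : 0 ≤ s) (hs1 : s ≤ 1)
    (hbudget : (1 - β) * S + β * s = (1 - β) * Q + β * q) :
    (if S = 0 then (1 : ℝ) else min (Q / S) 1) =
      (if s = 0 then (1 : ℝ) else min (q / s) 1) ↔ S = Q ∧ s = q := by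
  constructor
  · intro h
    rcases eq_or_lt_of_le hS with hS0 | hS0
    · -- S = 0
      rcases eq_or_lt_of_le hs with hs0 | hs0
      · exfalso; nlinarith
      · subst hS0
        rw [if_pos rfl, if_neg (ne_of_gt hs0)] at h
        have hqs : 1 ≤ q / s := by
          rcases le_or_gt 1 (q / s) with h' | h'
          · exact h'
          · rw [min_eq_left h'.le] at h; linarith
        have : s ≤ q := by
          have := (one_le_div hs0).mp hqs; linarith
        exfalso; nlinarith
    · rcases eq_or_lt_of_le hs with hs0 | hs0
      · subst hs0
        rw [if_pos rfl, if_neg (ne_of_gt hS0)] at h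
        have hQS : 1 ≤ Q / S := by
          rcases le_or_gt 1 (Q / S) with h' | h'
          · exact h'
          · rw [min_eq_left h'.le] at h; linarith
        have : S ≤ Q := by
          have := (one_le_div hS0).mp hQS; linarith
        exfalso; nlinarith
      · simp only [if_neg (ne_of_gt hS0), if_neg (ne_of_gt hs0)] at h
        rcases le_or_gt S Q with hSQ | hQS
        · have h1 : min (Q / S) 1 = 1 := min_eq_right ((one_le_div hS0).mpr hSQ)
          rw [h1] at h
          have hsq : s ≤ q := by
            by_contra hc
            push_neg at hc
            rw [min_eq_left (by rw [div_le_one hs0]; linarith)] at h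
            have : q / s < 1 := by rw [div_lt_one hs0]; linarith
            linarith
          constructor <;> nlinarith
        · have h1 : min (Q / S) 1 = Q / S := min_eq_left (by rw [div_le_one hS0]; linarith)
          have hlt : Q / S < 1 := by rw [div_lt_one hS0]; linarith
          rw [h1] at h
          have hqs : q / s < 1 := by
            by_contra hc
            push_neg at hc
            rw [min_eq_right hc] at h
            linarith
          rw [min_eq_left hqs.le] at h
          have : q < s := by rw [← div_lt_one hs0]; exact hqs
          exfalso; nlinarith
  · rintro ⟨rfl, rfl⟩
    rw [if_neg (ne_of_gt hQ), if_neg (ne_of_gt hq), div_self (ne_of_gt hQ),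
      div_self (ne_of_gt hq)]
end

section
/- A policy (S, s) on the budget line achieves both equalized odds and predictive rate parity if and only if one of the following holds: (i) S ≤ Q, s ≤ q, S = Qρ, s = qρ; (ii) S ≥ Q, s ≥ q, S = Qρ, s = qρ; or (iii) S = Q and s = q. -/
/-- A policy (S,s) on the budget line achieves both equalized odds
and predictive rate parity iff (i) S ≤ Q, s ≤ q, S = Qρ, s = qρ; or
(ii) S ≥ Q, s ≥ q, S = Qρ, s = qρ; or (iii) S = Q and s = q. -/
theorem both_parities_iff (β σ Q q S s ρ : ℝ)
    (hβ : 0 < β) (hβ1 : β < 1) (hσ : 0 < σ) (hσ1 : σ < 1)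
    (hQ : 0 < Q) (hQ1 : Q < 1) (hq : 0 < q) (hq1 : q < 1)
    (hS : 0 ≤ S) (hS1 : S ≤ 1) (hs : 0 ≤ s) (hs1 : s ≤ 1)
    (hbudget : (1 - β) * S + β * s = σ)
    (hρ : ρ = σ / ((1 - β) * Q + β * q)) :
    (min (S / Q) 1 = min (s / q) 1 ∧
      (if S = 0 then (1 : ℝ) else min (Q / S) 1) =
        (if s = 0 then (1 : ℝ) else min (q / s) 1)) ↔
      ((S ≤ Q ∧ s ≤ q ∧ S = Q * ρ ∧ s = q * ρ) ∨
       (Q ≤ S ∧ q ≤ s ∧ S = Q * ρ ∧ s = q * ρ) ∨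
       (S = Q ∧ s = q)) := by
  have hβ' : 0 < 1 - β := by linarith
  have hD : 0 < (1 - β) * Q + β * q := by
    have := mul_pos hβ' hQ; have := mul_pos hβ hq; linarith
  have hρ0 : 0 < ρ := hρ ▸ div_pos hσ hD
  constructor
  · rintro ⟨hEO, hPR⟩
    have hSpos : 0 < S := by
      rcases hS.lt_or_eq with h | h
      · exact h
      · exfalso
        have h0 : min (s / q) 1 = 0 := by
          rw [← hEO, ← h]; simp
        have hsq0 : s / q = 0 := by
          rcases le_total (s / q) 1 with h' | h'
          · rw [min_eq_left h'] at h0; exact h0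
          · rw [min_eq_right h'] at h0; linarith
        have hs0 : s = 0 := by
          rcases div_eq_zero_iff.mp hsq0 with h' | h'
          · exact h'
          · exact absurd h' hq.ne'
        rw [← h, hs0] at hbudget
        simp at hbudget; linarith
    have hspos : 0 < s := by
      rcases hs.lt_or_eq with h | h
      · exact h
      · exfalso
        have h0 : min (S / Q) 1 = 0 := by
          rw [hEO, ← h]; simp
        have hSQ0 : S / Q = 0 := by
          rcases le_total (S / Q) 1 with h' | h'
          · rw [min_eq_left h'] at h0; exact h0
          · rw [min_eq_right h'] at h0; linarith
        have hS0 : S = 0 := by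
          rcases div_eq_zero_iff.mp hSQ0 with h' | h'
          · exact h'
          · exact absurd h' hQ.ne'
        rw [hS0, ← h] at hbudget
        simp at hbudget; linarith
    have hPR' : min (Q / S) 1 = min (q / s) 1 := by
      simpa [hSpos.ne', hspos.ne'] using hPR
    rcases lt_trichotomy S Q with hlt | heq | hgt
    · have h1 : S / Q < 1 := (div_lt_one hQ).2 hlt
      rcases lt_trichotomy s q with hlt2 | heq2 | hgt2
      · have h2 : s / q < 1 := (div_lt_one hq).2 hlt2
        have hEO' : S / Q = s / q := by
          rwa [min_eq_left h1.le, min_eq_left h2.le] at hEO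
        have hcross : S * q = s * Q := (div_eq_div_iff hQ.ne' hq.ne').1 hEO'
        refine Or.inl ⟨hlt.le, hlt2.le, ?_, ?_⟩
        · rw [hρ, ← hbudget]; field_simp; linear_combination β * hcross
        · rw [hρ, ← hbudget]; field_simp; linear_combination (β - 1) * hcross
      · exfalso
        rw [min_eq_left h1.le, heq2, div_self hq.ne', min_self] at hEO
        linarith
      · exfalso
        have h2 : 1 ≤ s / q := (one_le_div hq).2 hgt2.le
        rw [min_eq_left h1.le, min_eq_right h2] at hEO; linarith
    · rcases lt_trichotomy s q with hlt2 | heq2 | hgt2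
      · exfalso
        have h2 : s / q < 1 := (div_lt_one hq).2 hlt2
        rw [heq, div_self hQ.ne', min_self, min_eq_left h2.le] at hEO
        linarith
      · exact Or.inr (Or.inr ⟨heq, heq2⟩)
      · exfalso
        have h2 : q / s < 1 := (div_lt_one hspos).2 hgt2
        rw [heq, div_self hQ.ne', min_self, min_eq_left h2.le] at hPR'
        linarith
    · have h1 : Q / S < 1 := (div_lt_one hSpos).2 hgt
      rcases lt_trichotomy s q with hlt2 | heq2 | hgt2
      · exfalso
        have h2 : 1 ≤ q / s := (one_le_div hspos).2 hlt2.le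
        rw [min_eq_left h1.le, min_eq_right h2] at hPR'; linarith
      · exfalso
        rw [min_eq_left h1.le, heq2, div_self hq.ne', min_self] at hPR'
        linarith
      · have h2 : q / s < 1 := (div_lt_one hspos).2 hgt2
        have hPR'' : Q / S = q / s := by
          rwa [min_eq_left h1.le, min_eq_left h2.le] at hPR'
        have hcross : Q * s = q * S := (div_eq_div_iff hSpos.ne' hspos.ne').1 hPR''
        refine Or.inr (Or.inl ⟨hgt.le, hgt2.le, ?_, ?_⟩)
        · rw [hρ, ← hbudget]; field_simp; linear_combination -β * hcross
        · rw [hρ, ← hbudget]; field_simp; linear_combination (1 - β) * hcross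
  · rintro (⟨hSQ, hsq, hSe, hse⟩ | ⟨hSQ, hsq, hSe, hse⟩ | ⟨hSe, hse⟩)
    · have hSpos : 0 < S := by rw [hSe]; positivity
      have hspos : 0 < s := by rw [hse]; positivity
      have hSQd : S / Q = ρ := by rw [hSe]; field_simp
      have hsqd : s / q = ρ := by rw [hse]; field_simp
      constructor
      · rw [hSQd, hsqd]
      · rw [if_neg hSpos.ne', if_neg hspos.ne']
        have h1 : 1 ≤ Q / S := (one_le_div hSpos).2 hSQ
        have h2 : 1 ≤ q / s := (one_le_div hspos).2 hsq
        rw [min_eq_right h1, min_eq_right h2]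
    · have hSpos : 0 < S := lt_of_lt_of_le hQ hSQ
      have hspos : 0 < s := lt_of_lt_of_le hq hsq
      have hSQd : S / Q = ρ := by rw [hSe]; field_simp
      have hsqd : s / q = ρ := by rw [hse]; field_simp
      have hρ1 : 1 ≤ ρ := by
        have : 1 ≤ S / Q := (one_le_div hQ).2 hSQ
        linarith [hSQd ▸ this]
      constructor
      · rw [min_eq_right (hSQd ▸ hρ1), min_eq_right (hsqd ▸ hρ1)]
      · rw [if_neg hSpos.ne', if_neg hspos.ne']
        have hQS : Q / S = q / s := by
          rw [hSe, hse]; field_simp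
        rw [hQS]
    · subst hSe; subst hse
      constructor
      · rw [div_self hQ.ne', div_self hq.ne']
      · rw [if_neg hQ.ne', if_neg hq.ne', div_self hQ.ne', div_self hq.ne']
end

section
/- If a + b > 0, a' + b' > 0, b > 0, b' > 0, a > a' and b ≤ b' with a > 0, then for every α ≥ 0 the welfare differential of (a, b) strictly exceeds that of (a', b'): (1/(1-α))((a+b)^{1-α} - b^{1-α}) > (1/(1-α))((a'+b')^{1-α} - b'^{1-α}) for α ≠ 1, and log((a+b)/b) > log((a'+b')/b') for α = 1. -/
/-!
Write `u_α` for the isoelastic utility, so that `Δ(a, b; α) = u_α (a + b) - u_α b`. For `α ≥ 0`,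
`u_α` has derivative `x ^ (-α) > 0` on `(0, ∞)`, and this derivative is antitone, so `u_α` is
strictly increasing and concave there. Raising the benefit from `a'` to `a` at base `b'` strictly
increases the differential by monotonicity, and lowering the base from `b'` to `b` does not
decrease it, since the increments of a concave function over intervals of fixed length shrink as
the interval moves right.
-/

open Set

theorem ConcaveOn.sub_le_sub_of_le {s : Set ℝ} {f : ℝ → ℝ} (hf : ConcaveOn ℝ s f) {x y h : ℝ}
    (hx : x ∈ s) (hyh : h + y ∈ s) (hxy : x ≤ y) (hh : 0 ≤ h) :
    f (h + y) - f y ≤ f (h + x) - f x := by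
  rcases hh.eq_or_lt with rfl | hh
  · simp
  rcases hxy.eq_or_lt with rfl | hxy
  · rfl
  have hxh : h + x ∈ s := hf.1.ordConnected.out hx hyh ⟨by linarith, by linarith⟩
  have hy : y ∈ s := hf.1.ordConnected.out hx hyh ⟨hxy.le, by linarith⟩
  have hslope : slope f y (h + y) ≤ slope f x (h + x) :=
    calc slope f y (h + y) = slope f (h + y) y := slope_comm f y _
      _ ≤ slope f (h + y) x := hf.slope_anti hyh ⟨hx, (by linarith : x < h + y).ne⟩
          ⟨hy, (by linarith : y < h + y).ne⟩ hxy.le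
      _ = slope f x (h + y) := slope_comm f _ x
      _ ≤ slope f x (h + x) := hf.slope_anti hx ⟨hxh, (by linarith : x < h + x).ne'⟩
          ⟨hyh, (by linarith : x < h + y).ne'⟩ (by linarith)
  simp only [slope_def_field, add_sub_cancel_right] at hslope
  exact (div_le_div_iff_of_pos_right hh).mp hslope

noncomputable def isoelasticUtility (α x : ℝ) : ℝ :=
  if α = 1 then Real.log x else x ^ (1 - α) / (1 - α)

theorem hasDerivAt_isoelasticUtility (α : ℝ) {x : ℝ} (hx : 0 < x) :
    HasDerivAt (isoelasticUtility α) (x ^ (-α)) x := by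
  by_cases hα : α = 1
  · have hu : isoelasticUtility α = Real.log := by
      funext x
      simp [isoelasticUtility, hα]
    rw [hu, hα, Real.rpow_neg_one]
    exact Real.hasDerivAt_log hx.ne'
  · have hu : isoelasticUtility α = fun x => x ^ (1 - α) / (1 - α) := by
      funext x
      simp [isoelasticUtility, hα]
    have hα' : 1 - α ≠ 0 := sub_ne_zero.mpr (Ne.symm hα)
    have h := (Real.hasDerivAt_rpow_const (p := 1 - α) (Or.inl hx.ne')).div_const (1 - α)
    rwa [mul_div_cancel_left₀ _ hα', sub_sub_cancel_left, ← hu] at h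

theorem continuousOn_isoelasticUtility (α : ℝ) : ContinuousOn (isoelasticUtility α) (Ioi 0) :=
  fun _ hx ↦ (hasDerivAt_isoelasticUtility α hx).continuousAt.continuousWithinAt

theorem deriv_isoelasticUtility (α : ℝ) {x : ℝ} (hx : 0 < x) :
    deriv (isoelasticUtility α) x = x ^ (-α) :=
  (hasDerivAt_isoelasticUtility α hx).deriv

theorem strictMonoOn_isoelasticUtility (α : ℝ) : StrictMonoOn (isoelasticUtility α) (Ioi 0) := by
  refine strictMonoOn_of_deriv_pos (convex_Ioi 0) (continuousOn_isoelasticUtility α) ?_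
  rw [interior_Ioi]
  intro x hx
  rw [deriv_isoelasticUtility α hx]
  exact Real.rpow_pos_of_pos hx _

theorem concaveOn_isoelasticUtility {α : ℝ} (hα : 0 ≤ α) :
    ConcaveOn ℝ (Ioi 0) (isoelasticUtility α) := by
  refine AntitoneOn.concaveOn_of_deriv (convex_Ioi 0) (continuousOn_isoelasticUtility α)
    ?_ ?_ <;> rw [interior_Ioi]
  · exact fun _ hx ↦ (hasDerivAt_isoelasticUtility α hx).differentiableAt.differentiableWithinAt
  · intro x hx y hy hxy
    rw [deriv_isoelasticUtility α hx, deriv_isoelasticUtility α hy]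
    exact Real.rpow_le_rpow_of_nonpos hx hxy (neg_nonpos.mpr hα)

theorem differential_dominance_general (a b a' b' : ℝ)
    (hab' : 0 < a' + b') (hb : 0 < b)
    (haa : a' < a) (hbb : b ≤ b') (ha : 0 < a)
    (Δ : ℝ → ℝ → ℝ → ℝ)
    (hΔ : ∀ x y α, Δ x y α = if α = 1 then Real.log (x + y) - Real.log y
      else (1 / (1 - α)) * ((x + y) ^ (1 - α) - y ^ (1 - α))) :
    ∀ α : ℝ, 0 ≤ α → Δ a' b' α < Δ a b α := by
  intro α hα
  set u := isoelasticUtility α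
  have hΔu : ∀ x y, Δ x y α = u (x + y) - u y := by
    intro x y
    simp only [hΔ, u, isoelasticUtility]
    split_ifs <;> ring
  rw [hΔu, hΔu]
  calc u (a' + b') - u b' < u (a + b') - u b' := by
        gcongr
        exact strictMonoOn_isoelasticUtility α hab' (show 0 < a + b' by linarith) (by linarith)
    _ ≤ u (a + b) - u b :=
        (concaveOn_isoelasticUtility hα).sub_le_sub_of_le hb (show 0 < a + b' by linarith) hbb ha.le

/-- If a + b > 0, a' + b' > 0, b > 0, b' > 0, a > a', b ≤ b' and
a > 0, then for every α ≥ 0 the welfare differential of (a,b) strictly exceeds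
that of (a',b'). -/
theorem differential_dominance (a b a' b' : ℝ)
    (hab : 0 < a + b) (hab' : 0 < a' + b') (hb : 0 < b) (hb' : 0 < b')
    (haa : a' < a) (hbb : b ≤ b') (ha : 0 < a)
    (Δ : ℝ → ℝ → ℝ → ℝ)
    (hΔ : ∀ x y α, Δ x y α = if α = 1 then Real.log (x + y) - Real.log y
      else (1 / (1 - α)) * ((x + y) ^ (1 - α) - y ^ (1 - α))) :
    ∀ α : ℝ, 0 ≤ α → Δ a' b' α < Δ a b α :=
  differential_dominance_general a b a' b' hab' hb haa hbb ha Δ hΔ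
end

section
/- For a, a' > 0 and b, b' > 0 with b < b' and a + b < a' + b', as α → ∞ selection priority is governed by the base utility: there exists α₀ such that for all α > α₀, Δ(a,b;α) > Δ(a',b';α). -/
/-- If `x > 1` and `t < -(log 2 / log x)`, then `x ^ t < 1/2`. -/
lemma rpow_lt_half (x t : ℝ) (hx : 1 < x) (ht : t < -(Real.log 2 / Real.log x)) :
    x ^ t < 1 / 2 := by
  have hlx : 0 < Real.log x := Real.log_pos hx
  have h1 : t * Real.log x < -Real.log 2 := by
    have h := mul_lt_mul_of_pos_right ht hlx
    have he : -(Real.log 2 / Real.log x) * Real.log x = -Real.log 2 := by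
      field_simp
    linarith
  have hx0 : 0 < x := lt_trans one_pos hx
  rw [Real.rpow_def_of_pos hx0]
  have : Real.exp (Real.log x * t) < Real.exp (-Real.log 2) := by
    apply Real.exp_lt_exp.mpr; nlinarith
  calc Real.exp (Real.log x * t) < Real.exp (-Real.log 2) := this
    _ = 1 / 2 := by
        rw [← Real.log_inv, Real.exp_log (by norm_num)]; norm_num

/-- In the Rawlsian limit α → ∞, priority is governed by base
utility: for 0 < b < b', a, a' > 0 and a + b < a' + b', there exists α₀ such that
for all α > α₀ the welfare differential of (a,b) exceeds that of (a',b'). -/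
theorem rawlsian_limit (a a' b b' : ℝ)
    (hb : 0 < b) (hbb : b < b') (ha : 0 < a) (ha' : 0 < a')
    (hsum : a + b < a' + b')
    (Δ : ℝ → ℝ → ℝ → ℝ)
    (hΔ : ∀ x y α, Δ x y α = if α = 1 then Real.log (x + y) - Real.log y
      else (1 / (1 - α)) * ((x + y) ^ (1 - α) - y ^ (1 - α))) :
    ∃ α₀ : ℝ, ∀ α : ℝ, α₀ < α → Δ a' b' α < Δ a b α := by
  set r₁ : ℝ := b' / b with hr₁
  set r₂ : ℝ := (a + b) / b with hr₂
  have hr₁1 : 1 < r₁ := (one_lt_div hb).mpr hbb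
  have hr₂1 : 1 < r₂ := (one_lt_div hb).mpr (by linarith)
  refine ⟨1 + max (Real.log 2 / Real.log r₁) (Real.log 2 / Real.log r₂), fun α hα => ?_⟩
  have hα1 : 1 < α := by
    have h1 : 0 < Real.log 2 / Real.log r₁ :=
      div_pos (Real.log_pos one_lt_two) (Real.log_pos hr₁1)
    have := le_max_left (Real.log 2 / Real.log r₁) (Real.log 2 / Real.log r₂)
    linarith
  have hαne : α ≠ 1 := ne_of_gt hα1
  set t : ℝ := 1 - α with htdef
  have ht1 : t < -(Real.log 2 / Real.log r₁) := by
    have := le_max_left (Real.log 2 / Real.log r₁) (Real.log 2 / Real.log r₂)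
    simp only [htdef]; linarith
  have ht2 : t < -(Real.log 2 / Real.log r₂) := by
    have := le_max_right (Real.log 2 / Real.log r₁) (Real.log 2 / Real.log r₂)
    simp only [htdef]; linarith
  have hbt : (0:ℝ) < b ^ t := Real.rpow_pos_of_pos hb t
  -- b' ^ t < b^t / 2
  have hb'0 : 0 < b' := lt_trans hb hbb
  have key1 : b' ^ t < b ^ t / 2 := by
    have : b' ^ t = b ^ t * r₁ ^ t := by
      rw [← Real.mul_rpow hb.le (by positivity : (0:ℝ) ≤ r₁)]
      congr 1; rw [hr₁]; field_simp
    rw [this]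
    have := rpow_lt_half r₁ t hr₁1 ht1
    nlinarith
  have key2 : (a + b) ^ t < b ^ t / 2 := by
    have : (a + b) ^ t = b ^ t * r₂ ^ t := by
      rw [← Real.mul_rpow hb.le (by positivity : (0:ℝ) ≤ r₂)]
      congr 1; rw [hr₂]; field_simp
    rw [this]
    have := rpow_lt_half r₂ t hr₂1 ht2
    nlinarith
  have key3 : (0:ℝ) < (a' + b') ^ t := Real.rpow_pos_of_pos (by linarith) t
  rw [hΔ, hΔ, if_neg hαne, if_neg hαne]
  have hneg : 1 / (1 - α) < 0 := by
    apply div_neg_of_pos_of_neg one_pos; linarith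
  have hmain : (a + b) ^ (1 - α) - b ^ (1 - α) < (a' + b') ^ (1 - α) - b' ^ (1 - α) := by
    simp only [← htdef]; linarith
  nlinarith [hmain, hneg]
end

section
/- Suppose A_min + B > 0, a_min + b > 0, B > b > 0, A_max > A_min, a_max > a_min, and α ≥ 0. If a(s) > 0 for all s in the relevant range and b < B, then for fixed marginal benefits with a(s) = A(S), the protected group's marginal welfare differential weakly exceeds the nonprotected group's: Δ'_s(α) ≥ Δ_S(α), with equality iff α = 0 or a(s) = 0. -/
/-!
Both differentials are increments `u (m + c) - u c` of the isoelastic utility `u` with exponent `α`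
over the same step `m = a(s) = A(S) > 0`, taken at the base utilities `c = B` and `c = b`.
Since `u' x = x ^ (-α)` is strictly decreasing for `α > 0`, the increment strictly decreases in
the base `c`, so the lower base `b` gets the larger differential. For `α = 0`, `u` is the identity
and both differentials equal `m`.
-/

open Real Set

theorem strictAntiOn_sub_shift_of_hasDerivAt {f f' : ℝ → ℝ} {c m : ℝ} (hm : 0 < m)
    (hf : ∀ x ∈ Ioi c, HasDerivAt f (f' x) x) (hf' : StrictAntiOn f' (Ioi c)) :
    StrictAntiOn (fun t => f (m + t) - f t) (Ioi c) := by
  have hshift : ∀ t ∈ Ioi c, m + t ∈ Ioi c := fun t ht => lt_add_of_pos_of_lt' hm ht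
  have hderiv : ∀ t ∈ Ioi c, HasDerivAt (fun t => f (m + t) - f t) (f' (m + t) - f' t) t :=
    fun t ht => (((hf _ (hshift t ht)).comp t ((hasDerivAt_id t).const_add m)).congr_deriv
      (mul_one _)).sub (hf t ht)
  refine strictAntiOn_of_hasDerivWithinAt_neg (f' := fun t => f' (m + t) - f' t) (convex_Ioi c)
    (fun t ht => (hderiv t ht).continuousAt.continuousWithinAt) (fun t ht => ?_) (fun t ht => ?_)
  · rw [interior_Ioi] at ht ⊢
    exact (hderiv t ht).hasDerivWithinAt
  · rw [interior_Ioi] at ht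
    exact sub_neg.2 (hf' ht (hshift t ht) (lt_add_of_pos_left t hm))

noncomputable def isoelastic (α x : ℝ) : ℝ :=
  if α = 1 then log x else x ^ (1 - α) / (1 - α)

theorem isoelastic_zero (x : ℝ) : isoelastic 0 x = x := by
  simp [isoelastic]

theorem hasDerivAt_isoelastic (α : ℝ) {x : ℝ} (hx : 0 < x) :
    HasDerivAt (isoelastic α) (x ^ (-α)) x := by
  unfold isoelastic
  split_ifs with hα
  · subst hα
    simpa [rpow_neg_one] using hasDerivAt_log hx.ne'
  · have hα' : 1 - α ≠ 0 := sub_ne_zero.2 (Ne.symm hα)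
    refine ((hasDerivAt_rpow_const (p := 1 - α) (Or.inl hx.ne')).div_const (1 - α)).congr_deriv ?_
    rw [mul_div_cancel_left₀ _ hα', sub_sub_cancel_left]

theorem isoelastic_add_sub_lt {α m x y : ℝ} (hα : 0 < α) (hm : 0 < m) (hx : 0 < x) (hxy : x < y) :
    isoelastic α (m + y) - isoelastic α y < isoelastic α (m + x) - isoelastic α x :=
  strictAntiOn_sub_shift_of_hasDerivAt hm (fun _ ht => hasDerivAt_isoelastic α ht)
    (strictAntiOn_rpow_Ioi_of_exponent_neg (neg_neg_of_pos hα)) hx (hx.trans hxy) hxy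

theorem welfare_differential_eq {α m c : ℝ} :
    (if α = 1 then log (m + c) - log c
      else (1 / (1 - α)) * ((m + c) ^ (1 - α) - c ^ (1 - α))) =
      isoelastic α (m + c) - isoelastic α c := by
  unfold isoelastic
  split_ifs <;> ring

theorem lower_base_larger_differential_general (B b α S s : ℝ)
    (hBb : b < B) (hb : 0 < b)
    (hα : 0 ≤ α)
    (A a : ℝ → ℝ)
    (heq : a s = A S) (hpos : 0 < a s)
    (ΔS Δs : ℝ)
    (hΔS : ΔS = if α = 1 then Real.log (A S + B) - Real.log B
      else (1 / (1 - α)) * ((A S + B) ^ (1 - α) - B ^ (1 - α)))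
    (hΔs : Δs = if α = 1 then Real.log (a s + b) - Real.log b
      else (1 / (1 - α)) * ((a s + b) ^ (1 - α) - b ^ (1 - α))) :
    ΔS ≤ Δs ∧ (Δs = ΔS ↔ α = 0 ∨ a s = 0) := by
  rw [← heq, welfare_differential_eq] at hΔS
  rw [welfare_differential_eq] at hΔs
  rcases hα.eq_or_lt with rfl | hα
  · simp [hΔS, hΔs, isoelastic_zero]
  · have hlt : ΔS < Δs := hΔS ▸ hΔs ▸ isoelastic_add_sub_lt hα hpos hb hBb
    exact ⟨hlt.le, by simp [hlt.ne', hα.ne', hpos.ne']⟩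

/-- When the marginal benefits of the two groups are equal and
positive, a(s) = A(S) > 0, and the protected base utility is lower (0 < b < B),
the protected marginal welfare differential weakly exceeds the nonprotected one,
with equality iff α = 0 (or the common marginal benefit is 0, excluded here). -/
theorem lower_base_larger_differential (Amax Amin amax amin B b α S s : ℝ)
    (hAB : 0 < Amin + B) (hab : 0 < amin + b)
    (hBb : b < B) (hb : 0 < b)
    (hA : Amin < Amax) (ha : amin < amax) (hα : 0 ≤ α)
    (A a : ℝ → ℝ)
    (hAdef : ∀ t, A t = (1 - t) * Amax + t * Amin)
    (hadef : ∀ t, a t = (1 - t) * amax + t * amin)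
    (heq : a s = A S) (hpos : 0 < a s)
    (ΔS Δs : ℝ)
    (hΔS : ΔS = if α = 1 then Real.log (A S + B) - Real.log B
      else (1 / (1 - α)) * ((A S + B) ^ (1 - α) - B ^ (1 - α)))
    (hΔs : Δs = if α = 1 then Real.log (a s + b) - Real.log b
      else (1 / (1 - α)) * ((a s + b) ^ (1 - α) - b ^ (1 - α))) :
    ΔS ≤ Δs ∧ (Δs = ΔS ↔ α = 0 ∨ a s = 0) :=
  lower_base_larger_differential_general B b α S s hBb hb hα A a heq hpos ΔS Δs hΔS hΔs
end

section
/- If σ < (1-β)Q + βq (fewer selected than qualified, ρ < 1) and Q, q ∈ (0,1), then the unique policy on the budget line with S ≤ Q and s ≤ q achieving equalized odds is (S, s) = (Qρ, qρ), and this policy automatically achieves predictive rate parity (both predictive rates equal 1). -/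
/-- If σ < (1-β)Q + βq (so ρ < 1), then the unique policy on the
budget line with S ≤ Q and s ≤ q achieving equalized odds is (S,s) = (Qρ, qρ),
and that policy automatically achieves predictive rate parity, with both
predictive rates equal to 1. -/
theorem under_selection_unique_odds (β σ Q q ρ : ℝ)
    (hβ : 0 < β) (hβ1 : β < 1) (hσ : 0 < σ) (hσ1 : σ < 1)
    (hQ : 0 < Q) (hQ1 : Q < 1) (hq : 0 < q) (hq1 : q < 1)
    (hlt : σ < (1 - β) * Q + β * q)
    (hρ : ρ = σ / ((1 - β) * Q + β * q)) :
    (∀ S s : ℝ, 0 ≤ S → S ≤ 1 → 0 ≤ s → s ≤ 1 →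
      (1 - β) * S + β * s = σ → S ≤ Q → s ≤ q →
      (min (S / Q) 1 = min (s / q) 1 ↔ S = Q * ρ ∧ s = q * ρ)) ∧
    (if Q * ρ = 0 then (1 : ℝ) else min (Q / (Q * ρ)) 1) = 1 ∧
    (if q * ρ = 0 then (1 : ℝ) else min (q / (q * ρ)) 1) = 1 := by
  have hD : 0 < (1 - β) * Q + β * q := by nlinarith
  have hρpos : 0 < ρ := by rw [hρ]; positivity
  have hρ1 : ρ < 1 := by rw [hρ, div_lt_one hD]; exact hlt
  have hρD : ρ * ((1 - β) * Q + β * q) = σ := by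
    rw [hρ]; field_simp
  refine ⟨?_, ?_, ?_⟩
  · intro S s hS0 hS1 hs0 hs1 hbudget hSQ hsq
    rw [min_eq_left (by rw [div_le_one hQ]; exact hSQ),
        min_eq_left (by rw [div_le_one hq]; exact hsq)]
    constructor
    · intro h
      have h' : S * q = s * Q := by
        rw [div_eq_div_iff hQ.ne' hq.ne'] at h; linarith
      constructor <;> nlinarith [mul_pos hQ hq]
    · rintro ⟨h1, h2⟩
      rw [h1, h2]; field_simp
  · rw [if_neg (by positivity : Q * ρ ≠ 0)]
    have : (1 : ℝ) ≤ Q / (Q * ρ) := by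
      rw [le_div_iff₀ (by positivity)]; nlinarith
    simp [min_eq_right this]
  · rw [if_neg (by positivity : q * ρ ≠ 0)]
    have : (1 : ℝ) ≤ q / (q * ρ) := by
      rw [le_div_iff₀ (by positivity)]; nlinarith
    simp [min_eq_right this]
end
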